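/- Let A have nonpositive off-diagonal entries and set U_A = max_i (A_{i...i} + C_i) with C_i = Σ_{non-diagonal tuples} |A_{i i2...im}|, and C = U_A·I - A. Then C is a nonnegative tensor, and U_A - ρ(C) is the smallest real eigenvalue of A; in particular A is an M-tensor if and only if U_A - ρ(C) > 0. -/

import Mathlib

open scoped BigOperators

/-- Action of an `(k+1)`-order `n`-dimensional real tensor on a complex vector:
`(A x^{m-1})_i = ∑_{i2,...,im} A_{i i2...im} x_{i2} ⋯ x_{im}` (here `k = m-1`). -/
noncomputable def tApplyC {n k : ℕ} (A : Fin n → (Fin k → Fin n) → ℝ) (x : Fin n → ℂ) (i : Fin n) : ℂ :=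
  ∑ j : Fin k → Fin n, (A i j : ℂ) * ∏ t, x (j t)

/-- Real version of the tensor action. -/
def tApplyR {n k : ℕ} (A : Fin n → (Fin k → Fin n) → ℝ) (x : Fin n → ℝ) (i : Fin n) : ℝ :=
  ∑ j : Fin k → Fin n, A i j * ∏ t, x (j t)

/-- `(lam, x)` is an eigenvalue-eigenvector pair: `x ≠ 0` and `A x^{m-1} = lam x^{[m-1]}`. -/
def IsEigPair {n k : ℕ} (A : Fin n → (Fin k → Fin n) → ℝ) (lam : ℂ) (x : Fin n → ℂ) : Prop :=
  x ≠ 0 ∧ ∀ i, tApplyC A x i = lam * x i ^ k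

/-- `lam` is an eigenvalue of `A`. -/
def IsEig {n k : ℕ} (A : Fin n → (Fin k → Fin n) → ℝ) (lam : ℂ) : Prop :=
  ∃ x, IsEigPair A lam x

/-- The set of moduli of eigenvalues of `A`. -/
def modSet {n k : ℕ} (A : Fin n → (Fin k → Fin n) → ℝ) : Set ℝ :=
  {r | ∃ lam, IsEig A lam ∧ r = ‖lam‖}

/-- The spectral radius: supremum of moduli of eigenvalues. -/
noncomputable def specRad {n k : ℕ} (A : Fin n → (Fin k → Fin n) → ℝ) : ℝ :=
  sSup (modSet A)

/-- The identity tensor: entries `δ_{i i2...im}`. -/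
noncomputable def idT (n k : ℕ) : Fin n → (Fin k → Fin n) → ℝ :=
  fun i j => if (∀ t, j t = i) then 1 else 0

/-- Entrywise nonnegative tensor. -/
def NonnegT {n k : ℕ} (A : Fin n → (Fin k → Fin n) → ℝ) : Prop := ∀ i j, 0 ≤ A i j

/-- `A` is an M-tensor: `A = c I - B` with `B ≥ 0` and `c > ρ(B)`. -/
def IsMTensor {n k : ℕ} (A : Fin n → (Fin k → Fin n) → ℝ) : Prop :=
  ∃ (B : Fin n → (Fin k → Fin n) → ℝ) (c : ℝ),
    NonnegT B ∧ specRad B < c ∧ ∀ i j, A i j = c * idT n k i j - B i j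

/-- `ρ(A)` is an eigenvalue of `A` and bounds the modulus of every eigenvalue
(the Yang–Yang theorem for nonnegative tensors). -/
def HasSpecRad {n k : ℕ} (A : Fin n → (Fin k → Fin n) → ℝ) : Prop :=
  IsEig A (specRad A) ∧ ∀ lam, IsEig A lam → ‖lam‖ ≤ specRad A

/-- Off-diagonal entries of `A` are all nonpositive (`A ∈ 𝕫`). -/
def ZTensor {n k : ℕ} (A : Fin n → (Fin k → Fin n) → ℝ) : Prop :=
  ∀ i j, (¬ ∀ t, j t = i) → A i j ≤ 0

/-- Irreducibility of a tensor. -/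
def IrreducibleT {n k : ℕ} (A : Fin n → (Fin k → Fin n) → ℝ) : Prop :=
  ¬ ∃ S : Set (Fin n), S.Nonempty ∧ S ≠ Set.univ ∧
      ∀ i ∈ S, ∀ j : Fin k → Fin n, (∀ t, j t ∉ S) → A i j = 0

/-- `C_i = ∑_{(i2,...,im) not all equal to i} |A_{i i2...im}|`. -/
noncomputable def offDiagSum {n k : ℕ} (A : Fin n → (Fin k → Fin n) → ℝ) (i : Fin n) : ℝ :=
  ∑ j ∈ Finset.univ.filter (fun j : Fin k → Fin n => ¬ ∀ t, j t = i), |A i j|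

/-! Every eigenpair `(λ, x)` of `A` is an eigenpair `(c - λ, x)` of `D = c I - A`. When `D ≥ 0`,
the Yang–Yang theorem makes `ρ(D)` an eigenvalue of `D`, hence `c - ρ(D)` one of `A`, and bounds
`|c - λ| ≤ ρ(D)`, so `c - ρ(D) ≤ λ` for every real eigenvalue `λ` of `A`. With `c = U_A` the
tensor `D = C` is nonnegative because the off-diagonal entries of `A` are `≤ 0` and `U_A` dominates
its diagonal; applying the same bound to any representation `A = c I - B` gives the M-tensor
criterion. -/

theorem offDiagSum_nonneg {n k : ℕ} (A : Fin n → (Fin k → Fin n) → ℝ) (i : Fin n) :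
    0 ≤ offDiagSum A i :=
  Finset.sum_nonneg fun j _ => abs_nonneg (A i j)

section Shift

variable {n k : ℕ} {A D : Fin n → (Fin k → Fin n) → ℝ} {c : ℝ}

theorem tApplyC_idT (x : Fin n → ℂ) (i : Fin n) : tApplyC (idT n k) x i = x i ^ k := by
  unfold tApplyC idT
  rw [Finset.sum_eq_single (fun _ => i)]
  · simp
  · intro j _ hj
    simp [show ¬ ∀ t, j t = i from fun h => hj (funext h)]
  · simp

theorem tApplyC_of_eq_smul_idT_sub (hD : ∀ i j, D i j = c * idT n k i j - A i j)
    (x : Fin n → ℂ) (i : Fin n) : tApplyC D x i = c * x i ^ k - tApplyC A x i := by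
  rw [← tApplyC_idT x i]
  unfold tApplyC
  rw [Finset.mul_sum, ← Finset.sum_sub_distrib]
  refine Finset.sum_congr rfl fun j _ => ?_
  rw [hD]
  push_cast
  ring

theorem IsEig.of_eq_smul_idT_sub (hD : ∀ i j, D i j = c * idT n k i j - A i j) {lam : ℂ}
    (h : IsEig A lam) : IsEig D (c - lam) := by
  obtain ⟨x, hx, hev⟩ := h
  exact ⟨x, hx, fun i => by rw [tApplyC_of_eq_smul_idT_sub hD, hev i]; ring⟩

theorem sub_specRad_le_of_isEig (hD : ∀ i j, D i j = c * idT n k i j - A i j)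
    (hρ : HasSpecRad D) {lam : ℝ} (h : IsEig A lam) : c - specRad D ≤ lam := by
  have hbound := hρ.2 _ (h.of_eq_smul_idT_sub hD)
  rw [← Complex.ofReal_sub, Complex.norm_real, Real.norm_eq_abs] at hbound
  linarith [le_abs_self (c - lam)]

theorem nonnegT_of_eq_smul_idT_sub (hZ : ZTensor A) (hdiag : ∀ i, A i (fun _ => i) ≤ c)
    (hD : ∀ i j, D i j = c * idT n k i j - A i j) : NonnegT D := by
  intro i j
  rw [hD, idT]
  by_cases hj : ∀ t, j t = i
  · rw [if_pos hj, funext hj]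
    linarith [hdiag i]
  · rw [if_neg hj]
    linarith [hZ i j hj]

end Shift

/-- with `U_A = max_i (A_{i...i} + C_i)` and `C = U_A I - A`, the tensor `C` is
nonnegative, `U_A - ρ(C)` is the smallest real eigenvalue of `A`, and `A` is an M-tensor
iff `U_A - ρ(C) > 0`. -/
theorem smallest_real_eig {n k : ℕ} (hn : 0 < n)
    (A C : Fin n → (Fin k → Fin n) → ℝ) (U : ℝ) (hZ : ZTensor A)
    (hU : U = Finset.univ.sup' (Finset.univ_nonempty_iff.mpr (Fin.pos_iff_nonempty.mp hn))
        (fun i => A i (fun _ => i) + offDiagSum A i))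
    (hC : ∀ i j, C i j = U * idT n k i j - A i j)
    (hYY : ∀ D : Fin n → (Fin k → Fin n) → ℝ, NonnegT D → HasSpecRad D) :
    NonnegT C ∧
    IsEig A ((U - specRad C : ℝ) : ℂ) ∧
    (∀ lam : ℝ, IsEig A (lam : ℂ) → U - specRad C ≤ lam) ∧
    (IsMTensor A ↔ 0 < U - specRad C) := by
  have hdiag : ∀ i, A i (fun _ => i) ≤ U := fun i => by
    have hle := hU ▸ Finset.le_sup' (fun i => A i (fun _ => i) + offDiagSum A i)
      (Finset.mem_univ i)
    linarith [offDiagSum_nonneg A i]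
  have hCnn : NonnegT C := nonnegT_of_eq_smul_idT_sub hZ hdiag hC
  have hAC : ∀ i j, A i j = U * idT n k i j - C i j := fun i j => by linarith [hC i j]
  have hAeig : IsEig A ((U - specRad C : ℝ) : ℂ) := by
    rw [Complex.ofReal_sub]
    exact (hYY C hCnn).1.of_eq_smul_idT_sub hAC
  refine ⟨hCnn, hAeig, fun lam => sub_specRad_le_of_isEig hC (hYY C hCnn), ?_, ?_⟩
  · rintro ⟨B, c, hBnn, hlt, hA⟩
    have hBA : ∀ i j, B i j = c * idT n k i j - A i j := fun i j => by linarith [hA i j]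
    linarith [sub_specRad_le_of_isEig hBA (hYY B hBnn) hAeig]
  · exact fun hpos => ⟨C, U, hCnn, by linarith, hAC⟩
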